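/- arXiv:2512.16768 — 3 statements merged into one kernel-verified Lean document; each statement's English description precedes it below -/
import Mathlib

section
/- Let X ~ N(0, I_d), m₁ ∈ ℝ^d, and Σ₁ positive definite with Σ₁ ≠ I_d. Let E = ‖m₁ + (Σ₁^{1/2} - I_d)X‖² and let ρ = max_i (√λ_i(Σ₁) - 1)² > 0 where λ_i(Σ₁) are the eigenvalues of Σ₁. Then for every u > 0, P(E ≥ u) ≤ 2^{d/2} exp(‖m₁‖²/(2ρ)) · exp(-u/(4ρ)). -/
open MeasureTheory ProbabilityTheory Matrix Real
open scoped ENNReal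

/-!
Write `A = Σ₁^{1/2} - I`. The eigenvalues of `AᵀA = (Σ₁^{1/2} - I)²` are the `(√λᵢ - 1)² ≤ ρ`,
so `‖Ax‖² ≤ ρ‖x‖²`, and with `t = 1/(4ρ)` and `w = 2t·Am₁`,
`t‖m₁ + Ax‖² ≤ t‖m₁‖² + ⟨w, x⟩ + ‖x‖²/4`.
The exponential of the right-hand side factors over the coordinates of `X`, and
`E[exp(aW + bW²)] = (1 - 2b)^{-1/2} exp(a²/(2(1 - 2b)))` with `b = 1/4` gives
`E[exp(tE)] ≤ 2^{d/2} exp(t‖m₁‖² + ‖w‖²)`, where `‖w‖² ≤ ‖m₁‖²/(4ρ)`.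
Markov's inequality for `exp(t(E - u))` concludes.
-/

open scoped MatrixOrder in
theorem Matrix.sub_one_eq_cfc_sqrt_sub_one {n : Type*} [Fintype n] [DecidableEq n]
    {S Sig : Matrix n n ℝ} (hS : S.PosSemidef) (hSsq : S * S = Sig) :
    S - 1 = cfc (fun z => √z - 1) Sig := by
  have hSig : 0 ≤ Sig := by
    rw [← hSsq]
    nth_rw 1 [← hS.1.eq]
    exact (posSemidef_conjTranspose_mul_self S).nonneg
  rw [cfc_sub _ _ Sig (hf := Sig.finite_real_spectrum.continuousOn _), cfc_const_one ℝ Sig,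
    ← cfcₙ_eq_cfc, ← CFC.sqrt_eq_real_sqrt Sig, CFC.sqrt_unique hSsq hS.nonneg]

open scoped MatrixOrder in
theorem Matrix.IsHermitian.dotProduct_cfc_mulVec_self_le {n : Type*} [Fintype n] [DecidableEq n]
    {A : Matrix n n ℝ} (hA : A.IsHermitian) (f : ℝ → ℝ) {c : ℝ}
    (hc : ∀ i, f (hA.eigenvalues i) ^ 2 ≤ c) (x : n → ℝ) :
    (cfc f A *ᵥ x) ⬝ᵥ (cfc f A *ᵥ x) ≤ c * (x ⬝ᵥ x) := by
  have hcont : ∀ g : ℝ → ℝ, ContinuousOn g (spectrum ℝ A) :=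
    fun g => A.finite_real_spectrum.continuousOn g
  have hsq : (cfc f A)ᵀ * cfc f A = cfc (fun z => f z ^ 2) A := by
    rw [← conjTranspose_eq_transpose_of_trivial, ← star_eq_conjTranspose,
      (cfc_predicate f A).star_eq, ← cfc_mul f f A (hcont f) (hcont f)]
    simp_rw [sq]
  have hle : cfc (fun z => f z ^ 2) A ≤ algebraMap ℝ _ c := by
    refine le_algebraMap_of_spectrum_le fun z hz => ?_
    rw [cfc_map_spectrum (fun z => f z ^ 2) A (hf := hcont _),
      hA.spectrum_real_eq_range_eigenvalues] at hz
    obtain ⟨_, ⟨i, rfl⟩, rfl⟩ := hz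
    exact hc i
  have hnonneg := (Matrix.le_iff.mp hle).dotProduct_mulVec_nonneg x
  rw [dotProduct_mulVec, ← mulVec_transpose, mulVec_mulVec, hsq]
  simpa [sub_mulVec, dotProduct_sub, Algebra.algebraMap_eq_smul_one, smul_mulVec,
    dotProduct_comm] using hnonneg

theorem measure_ge_le_lintegral_exp_mul_sub {α : Type*} [MeasurableSpace α] (μ : Measure α)
    {f : α → ℝ} (hf : Measurable f) {t : ℝ} (ht : 0 ≤ t) (u : ℝ) :
    μ {x | u ≤ f x} ≤ ∫⁻ x, ENNReal.ofReal (exp (t * (f x - u))) ∂μ := by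
  calc μ {x | u ≤ f x} ≤ μ {x | 1 ≤ ENNReal.ofReal (exp (t * (f x - u)))} := by
        refine measure_mono fun x hx => ?_
        rw [Set.mem_ofPred, ← ENNReal.ofReal_one]
        exact ENNReal.ofReal_le_ofReal
          (one_le_exp (mul_nonneg ht (sub_nonneg.mpr (Set.mem_ofPred.mp hx))))
    _ ≤ _ := by
        simpa using mul_meas_ge_le_lintegral₀
          (by fun_prop : Measurable fun x => ENNReal.ofReal (exp (t * (f x - u)))).aemeasurable 1

theorem lintegral_exp_mul_add_mul_sq_gaussianReal (a b : ℝ) (hb : b < 1 / 2) :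
    ∫⁻ y, ENNReal.ofReal (exp (a * y + b * y ^ 2)) ∂gaussianReal 0 1 =
      ENNReal.ofReal ((1 - 2 * b) ^ (-(1 / 2 : ℝ)) * exp (a ^ 2 / (2 * (1 - 2 * b)))) := by
  have hb' : 0 < 1 - 2 * b := by linarith
  -- completing the square in the Gaussian density
  have hdensity : ∀ y, gaussianPDF 0 1 y * ENNReal.ofReal (exp (a * y + b * y ^ 2)) =
      ENNReal.ofReal (exp (a ^ 2 / (2 * (1 - 2 * b))) * ((√(2 * π))⁻¹ *
        exp (-((1 - 2 * b) / 2) * (y - a / (1 - 2 * b)) ^ 2))) := by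
    intro y
    rw [gaussianPDF, ← ENNReal.ofReal_mul (gaussianPDFReal_nonneg 0 1 y), gaussianPDFReal_def,
      mul_assoc, ← exp_add, mul_left_comm, ← exp_add]
    congr 3
    · simp
    · simp only [NNReal.coe_one]
      field_simp
      ring
  rw [gaussianReal_of_var_ne_zero 0 one_ne_zero,
    lintegral_withDensity_eq_lintegral_mul _ (measurable_gaussianPDF 0 1) (by fun_prop)]
  simp only [Pi.mul_apply, hdensity]
  rw [← ofReal_integral_eq_lintegral_ofReal, integral_const_mul, integral_const_mul,
    integral_sub_right_eq_self (fun y => exp (-((1 - 2 * b) / 2) * y ^ 2)), integral_gaussian]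
  · rw [mul_comm]
    congr 2
    rw [← sqrt_inv, ← sqrt_mul (by positivity), sqrt_eq_rpow, rpow_neg hb'.le, ← inv_rpow hb'.le]
    congr 1
    field_simp
  · exact (((integrable_exp_neg_mul_sq (by positivity)).comp_sub_right _).const_mul _).const_mul _
  · exact .of_forall fun y => by positivity

section

variable {ι : Type*} [Fintype ι]

theorem lintegral_fintype_prod_eq_prod {Ω : ι → Type*} [∀ i, MeasurableSpace (Ω i)]
    (μ : ∀ i, Measure (Ω i)) [∀ i, IsProbabilityMeasure (μ i)] (f : ∀ i, Ω i → ℝ≥0∞)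
    (hf : ∀ i, Measurable (f i)) :
    ∫⁻ x, ∏ i, f i (x i) ∂Measure.pi μ = ∏ i, ∫⁻ y, f i y ∂μ i := by
  rw [lintegral_prod_eq_prod_lintegral_of_indepFun _ _
    (iIndepFun_pi (X := f) fun i => (hf i).aemeasurable)
    fun i => (hf i).comp (measurable_pi_apply i)]
  exact Finset.prod_congr rfl fun i _ => (measurePreserving_eval μ i).lintegral_comp (hf i)

theorem lintegral_exp_dotProduct_add_mul_dotProduct_self_stdGaussian (w : ι → ℝ) (b : ℝ)
    (hb : b < 1 / 2) :
    ∫⁻ x, ENNReal.ofReal (exp (w ⬝ᵥ x + b * (x ⬝ᵥ x))) ∂(Measure.pi fun _ : ι => gaussianReal 0 1) =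
      ENNReal.ofReal ((1 - 2 * b) ^ (-(Fintype.card ι : ℝ) / 2) *
        exp (w ⬝ᵥ w / (2 * (1 - 2 * b)))) := by
  have hb' : 0 < 1 - 2 * b := by linarith
  have hsplit : ∀ x : ι → ℝ, ENNReal.ofReal (exp (w ⬝ᵥ x + b * (x ⬝ᵥ x))) =
      ∏ i, ENNReal.ofReal (exp (w i * x i + b * x i ^ 2)) := by
    intro x
    rw [← ENNReal.ofReal_prod_of_nonneg fun i _ => (exp_pos _).le, ← exp_sum]
    simp only [dotProduct, Finset.mul_sum, Finset.sum_add_distrib, sq]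
  simp only [hsplit]
  rw [lintegral_fintype_prod_eq_prod (fun _ => gaussianReal 0 1)
    (fun i y => ENNReal.ofReal (exp (w i * y + b * y ^ 2))) fun i => by fun_prop]
  simp only [lintegral_exp_mul_add_mul_sq_gaussianReal _ _ hb]
  rw [← ENNReal.ofReal_prod_of_nonneg fun i _ => by positivity, Finset.prod_mul_distrib,
    Finset.prod_const, ← exp_sum, ← rpow_natCast, ← rpow_mul hb'.le, ← Finset.sum_div]
  simp only [dotProduct, sq, Finset.card_univ]
  congr 3
  ring

theorem dotProduct_add_mulVec_self {A : Matrix ι ι ℝ} (hA : Aᵀ = A) (m x : ι → ℝ) :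
    (m + A *ᵥ x) ⬝ᵥ (m + A *ᵥ x) = m ⬝ᵥ m + 2 * ((A *ᵥ m) ⬝ᵥ x) + (A *ᵥ x) ⬝ᵥ (A *ᵥ x) := by
  have hcross : m ⬝ᵥ (A *ᵥ x) = (A *ᵥ m) ⬝ᵥ x := by
    rw [dotProduct_mulVec, ← mulVec_transpose, hA]
  rw [add_dotProduct, dotProduct_add, dotProduct_add, hcross, dotProduct_comm (A *ᵥ x), hcross]
  ring

theorem mul_dotProduct_add_mulVec_self_le {A : Matrix ι ι ℝ} (hA : Aᵀ = A) {ρ : ℝ}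
    (hAρ : ∀ x, (A *ᵥ x) ⬝ᵥ (A *ᵥ x) ≤ ρ * (x ⬝ᵥ x)) {t : ℝ} (ht : 0 ≤ t) (m x : ι → ℝ) :
    t * ((m + A *ᵥ x) ⬝ᵥ (m + A *ᵥ x)) ≤
      t * (m ⬝ᵥ m) + ((2 * t) • (A *ᵥ m)) ⬝ᵥ x + t * ρ * (x ⬝ᵥ x) := by
  have hquad := mul_le_mul_of_nonneg_left (hAρ x) ht
  rw [dotProduct_add_mulVec_self hA, smul_dotProduct, smul_eq_mul]
  linarith

theorem measure_dotProduct_add_mulVec_self_ge_le_stdGaussian (m : ι → ℝ) {A : Matrix ι ι ℝ}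
    (hA : Aᵀ = A) {ρ : ℝ} (hρ : 0 < ρ)
    (hAρ : ∀ x, (A *ᵥ x) ⬝ᵥ (A *ᵥ x) ≤ ρ * (x ⬝ᵥ x)) (u : ℝ) :
    (Measure.pi fun _ : ι => gaussianReal 0 1) {x | u ≤ (m + A *ᵥ x) ⬝ᵥ (m + A *ᵥ x)} ≤
      ENNReal.ofReal ((2 : ℝ) ^ ((Fintype.card ι : ℝ) / 2) * exp (m ⬝ᵥ m / (2 * ρ)) *
        exp (-u / (4 * ρ))) := by
  set t := (4 * ρ)⁻¹ with ht
  set w := (2 * t) • (A *ᵥ m)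
  have htρ : t * ρ = 1 / 4 := by rw [ht]; field_simp
  have hpointwise : ∀ x, t * ((m + A *ᵥ x) ⬝ᵥ (m + A *ᵥ x) - u) ≤
      (t * (m ⬝ᵥ m) - t * u) + (w ⬝ᵥ x + 1 / 4 * (x ⬝ᵥ x)) := by
    intro x
    have hbound := mul_dotProduct_add_mulVec_self_le hA hAρ (t := t) (by positivity) m x
    rw [htρ] at hbound
    linarith
  have hw : w ⬝ᵥ w ≤ m ⬝ᵥ m / (4 * ρ) :=
    calc w ⬝ᵥ w = (2 * t) ^ 2 * ((A *ᵥ m) ⬝ᵥ (A *ᵥ m)) := by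
          simp only [w, smul_dotProduct, dotProduct_smul, smul_eq_mul]; ring
      _ ≤ (2 * t) ^ 2 * (ρ * (m ⬝ᵥ m)) := by gcongr; exact hAρ m
      _ = m ⬝ᵥ m / (4 * ρ) := by rw [ht]; field_simp; ring
  have hgauss : ∫⁻ x, ENNReal.ofReal (exp (w ⬝ᵥ x + 1 / 4 * (x ⬝ᵥ x)))
      ∂(Measure.pi fun _ : ι => gaussianReal 0 1) =
        ENNReal.ofReal (2 ^ ((Fintype.card ι : ℝ) / 2) * exp (w ⬝ᵥ w)) := by
    rw [lintegral_exp_dotProduct_add_mul_dotProduct_self_stdGaussian _ _ (by norm_num),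
      neg_div, rpow_neg (by norm_num), ← inv_rpow (by norm_num)]
    norm_num
  calc _ ≤ ∫⁻ x, ENNReal.ofReal (exp (t * ((m + A *ᵥ x) ⬝ᵥ (m + A *ᵥ x) - u)))
        ∂(Measure.pi fun _ : ι => gaussianReal 0 1) :=
        measure_ge_le_lintegral_exp_mul_sub _ (by fun_prop) (by positivity) u
    _ ≤ ∫⁻ x, ENNReal.ofReal (exp (t * (m ⬝ᵥ m) - t * u)) *
          ENNReal.ofReal (exp (w ⬝ᵥ x + 1 / 4 * (x ⬝ᵥ x)))
        ∂(Measure.pi fun _ : ι => gaussianReal 0 1) := by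
      refine lintegral_mono fun x => ?_
      rw [← ENNReal.ofReal_mul (exp_pos _).le, ← exp_add]
      exact ENNReal.ofReal_le_ofReal (exp_le_exp.mpr (hpointwise x))
    _ = ENNReal.ofReal (2 ^ ((Fintype.card ι : ℝ) / 2) * exp (t * (m ⬝ᵥ m) - t * u + w ⬝ᵥ w)) := by
      rw [lintegral_const_mul _ (by fun_prop), hgauss, ← ENNReal.ofReal_mul (exp_pos _).le,
        exp_add]
      congr 1
      ring
    _ ≤ _ := by
      rw [mul_assoc, ← exp_add]
      refine ENNReal.ofReal_le_ofReal
        (mul_le_mul_of_nonneg_left (exp_le_exp.mpr ?_) (by positivity))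
      have h1 : t * (m ⬝ᵥ m) = m ⬝ᵥ m / (4 * ρ) := by rw [ht]; ring
      have h2 : m ⬝ᵥ m / (2 * ρ) = 2 * (m ⬝ᵥ m / (4 * ρ)) := by field_simp; ring
      have h3 : t * u = -(-u / (4 * ρ)) := by rw [ht]; ring
      linarith

end

theorem rectified_flow_energy_tail_general
    (d : ℕ) (m₁ : Fin d → ℝ)
    (Sig S : Matrix (Fin d) (Fin d) ℝ)
    (hHerm : Sig.IsHermitian)
    (hS : S.PosDef) (hSsq : S * S = Sig)
    (ρ : ℝ)
    (hρ : ρ = ⨆ i : Fin d, (Real.sqrt (hHerm.eigenvalues i) - 1) ^ 2)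
    (hρpos : 0 < ρ) (u : ℝ) :
    (Measure.pi fun _ : Fin d => gaussianReal 0 1)
        {x : Fin d → ℝ |
          u ≤ (m₁ + (S - 1) *ᵥ x) ⬝ᵥ (m₁ + (S - 1) *ᵥ x)} ≤
      ENNReal.ofReal
        ((2 : ℝ) ^ ((d : ℝ) / 2) * Real.exp ((m₁ ⬝ᵥ m₁) / (2 * ρ)) *
          Real.exp (-u / (4 * ρ))) := by
  have hρ_ge : ∀ i, (√(hHerm.eigenvalues i) - 1) ^ 2 ≤ ρ :=
    hρ ▸ le_ciSup (Set.finite_range _).bddAbove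
  have hsymm : (S - 1)ᵀ = S - 1 := by
    rw [← conjTranspose_eq_transpose_of_trivial, (hS.1.sub isHermitian_one).eq]
  have hbound : ∀ x, ((S - 1) *ᵥ x) ⬝ᵥ ((S - 1) *ᵥ x) ≤ ρ * (x ⬝ᵥ x) := by
    rw [sub_one_eq_cfc_sqrt_sub_one hS.posSemidef hSsq]
    exact hHerm.dotProduct_cfc_mulVec_self_le _ hρ_ge
  simpa using measure_dotProduct_add_mulVec_self_ge_le_stdGaussian m₁ hsymm hρpos hbound u

/-- Exponential concentration of the kinetic energy of the Gaussian rectified flow: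
for `X ~ N(0, I_d)`, `E = ‖m₁ + (Σ₁^{1/2} - I)X‖²` and
`ρ = max_i (√λ_i(Σ₁) - 1)² > 0`, one has
`P(E ≥ u) ≤ 2^{d/2} exp(‖m₁‖²/(2ρ)) exp(-u/(4ρ))` for every `u > 0`. -/
theorem rectified_flow_energy_tail
    (d : ℕ) (hd : 0 < d) (m₁ : Fin d → ℝ)
    (Sig S : Matrix (Fin d) (Fin d) ℝ)
    (hSig : Sig.PosDef) (hHerm : Sig.IsHermitian)
    (hS : S.PosDef) (hSsq : S * S = Sig) (hne : Sig ≠ 1)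
    (ρ : ℝ)
    (hρ : ρ = ⨆ i : Fin d, (Real.sqrt (hHerm.eigenvalues i) - 1) ^ 2)
    (hρpos : 0 < ρ) (u : ℝ) (hu : 0 < u) :
    (Measure.pi fun _ : Fin d => gaussianReal 0 1)
        {x : Fin d → ℝ |
          u ≤ (m₁ + (S - 1) *ᵥ x) ⬝ᵥ (m₁ + (S - 1) *ᵥ x)} ≤
      ENNReal.ofReal
        ((2 : ℝ) ^ ((d : ℝ) / 2) * Real.exp ((m₁ ⬝ᵥ m₁) / (2 * ρ)) *
          Real.exp (-u / (4 * ρ))) :=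
  rectified_flow_energy_tail_general d m₁ Sig S hHerm hS hSsq ρ hρ hρpos u
end

section
/- Let X₀ ~ N(0, I_d) and let D be a fixed dataset with M = max_i ‖x⁽ⁱ⁾‖ < ∞. Let ψ_t solve ψ'_t = v̂*(t, ψ_t), ψ_0 = X₀, where v̂* is the empirical rectified-flow velocity field satisfying ‖v̂*(t,z)‖ ≤ (M + ‖z‖)/(1-t). Fix t ∈ [0,T] with T < 1 and let K_t = ‖v̂*(t, ψ_t)‖². Then there exist constants C = e^{M²/16} and c_t = (1-t)⁴/32 such that for all u ≥ 2(1-t)^{-4}(2d + M²), P(K_t ≥ u) ≤ C e^{-c_t u}. -/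
/-!
Along the flow, the growth bound `‖v s z‖ ≤ (M + ‖z‖) / (1 - s)` and Grönwall give
`‖ψ t‖ ≤ (‖X₀‖ + M t) / (1 - t)`, hence `K_t ≤ 2 (‖X₀‖² + M²) / (1 - t)⁴`. So `K_t ≥ u` forces
`‖X₀‖² ≥ s := (1 - t)⁴ u / 2 - M² ≥ 2d`, and the Chernoff bound with
`E exp (‖X₀‖² / 4) = 2^{d/2}` gives `P(‖X₀‖² ≥ s) ≤ 2^{d/2} e^{-s/4} ≤ e^{-s/16}`.
-/

open MeasureTheory ProbabilityTheory Set Real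

lemma gaussianPDFReal_mul_exp_mul_sq (a y : ℝ) :
    gaussianPDFReal 0 1 y * exp (a * y ^ 2) = (√(2 * π))⁻¹ * exp (-(1 / 2 - a) * y ^ 2) := by
  simp only [gaussianPDFReal_def, NNReal.coe_one, mul_one, sub_zero]
  rw [mul_assoc, ← exp_add]
  congr 2
  ring

lemma integrable_exp_mul_sq_gaussianReal {a : ℝ} (ha : a < 1 / 2) :
    Integrable (fun y => exp (a * y ^ 2)) (gaussianReal 0 1) := by
  rw [gaussianReal_of_var_ne_zero 0 one_ne_zero, integrable_withDensity_iff_integrable_smul'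
    (measurable_gaussianPDF 0 1) (ae_of_all _ fun _ => gaussianPDF_lt_top)]
  simp only [toReal_gaussianPDF, smul_eq_mul, gaussianPDFReal_mul_exp_mul_sq]
  exact (integrable_exp_neg_mul_sq (by linarith)).const_mul _

lemma integral_exp_mul_sq_gaussianReal {a : ℝ} (ha : a < 1 / 2) :
    ∫ y, exp (a * y ^ 2) ∂gaussianReal 0 1 = (√(1 - 2 * a))⁻¹ := by
  simp only [integral_gaussianReal_eq_integral_smul one_ne_zero, smul_eq_mul,
    gaussianPDFReal_mul_exp_mul_sq, integral_const_mul, integral_gaussian]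
  rw [show π / (1 / 2 - a) = 2 * π / (1 - 2 * a) by field_simp,
    sqrt_div' _ (by linarith), div_eq_mul_inv, ← mul_assoc,
    inv_mul_cancel₀ (by positivity), one_mul]

section Chi2

variable {ι : Type*} [Fintype ι]

lemma integrable_exp_mul_norm_sq_pi_gaussianReal {a : ℝ} (ha : a < 1 / 2) :
    Integrable (fun x : ι → ℝ => exp (a * ‖WithLp.toLp 2 x‖ ^ 2))
      (Measure.pi fun _ => gaussianReal 0 1) := by
  simp only [EuclideanSpace.norm_sq_eq, Finset.mul_sum, exp_sum]
  exact Integrable.fintype_prod (f := fun _ y => exp (a * ‖y‖ ^ 2))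
    fun _ => by simpa using integrable_exp_mul_sq_gaussianReal ha

lemma mgf_norm_sq_pi_gaussianReal {a : ℝ} (ha : a < 1 / 2) :
    mgf (fun x : ι → ℝ => ‖WithLp.toLp 2 x‖ ^ 2) (Measure.pi fun _ => gaussianReal 0 1) a
      = (√(1 - 2 * a))⁻¹ ^ Fintype.card ι := by
  simp only [mgf, EuclideanSpace.norm_sq_eq, Finset.mul_sum, exp_sum, Real.norm_eq_abs, sq_abs]
  rw [integral_fintype_prod_eq_pow (fun y => exp (a * y ^ 2)), integral_exp_mul_sq_gaussianReal ha]

lemma measureReal_norm_sq_ge_le_pi_gaussianReal {a : ℝ} (ha0 : 0 ≤ a) (ha : a < 1 / 2) (s : ℝ) :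
    (Measure.pi fun _ : ι => gaussianReal 0 1).real {x | s ≤ ‖WithLp.toLp 2 x‖ ^ 2}
      ≤ exp (-a * s) * (√(1 - 2 * a))⁻¹ ^ Fintype.card ι := by
  rw [← mgf_norm_sq_pi_gaussianReal ha]
  exact measure_ge_le_exp_mul_mgf s ha0 (integrable_exp_mul_norm_sq_pi_gaussianReal ha)

lemma measure_norm_sq_ge_le_pi_gaussianReal {s : ℝ} (hs : 2 * Fintype.card ι ≤ s) :
    (Measure.pi fun _ : ι => gaussianReal 0 1) {x | s ≤ ‖WithLp.toLp 2 x‖ ^ 2}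
      ≤ ENNReal.ofReal (exp (-s / 16)) := by
  rw [← ofReal_measureReal]
  refine ENNReal.ofReal_le_ofReal ((measureReal_norm_sq_ge_le_pi_gaussianReal
    (a := 1 / 4) (by norm_num) (by norm_num) s).trans ?_)
  have hsqrt : (√(1 - 2 * (1 / 4 : ℝ)))⁻¹ ≤ exp (3 / 8) := by
    rw [← sqrt_inv, show (1 - 2 * (1 / 4 : ℝ))⁻¹ = 2 by norm_num, sqrt_le_left (exp_pos _).le,
      ← exp_nat_mul, ← exp_log two_pos]
    exact exp_le_exp.2 (by linarith [log_two_lt_d9])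
  calc exp (-(1 / 4) * s) * (√(1 - 2 * (1 / 4 : ℝ)))⁻¹ ^ Fintype.card ι
      ≤ exp (-(1 / 4) * s) * exp (3 / 8) ^ Fintype.card ι := by gcongr
    _ ≤ exp (-s / 16) := by
      rw [← exp_nat_mul, ← exp_add]
      exact exp_le_exp.2 (by linarith)

end Chi2

section Flow

variable {E : Type*} [NormedAddCommGroup E] [NormedSpace ℝ E]

/-- Grönwall for the singular rate `1/(1-s)`: the substitution `s = 1 - exp (-σ)` turns it into
the constant rate `1`. -/
theorem norm_le_of_norm_deriv_le_div_one_sub {ψ ψ' : ℝ → E} {M t : ℝ} (ht0 : 0 ≤ t) (ht1 : t < 1)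
    (hψ : ∀ s ∈ Icc 0 t, HasDerivAt ψ (ψ' s) s)
    (hbound : ∀ s ∈ Ico 0 t, ‖ψ' s‖ ≤ (M + ‖ψ s‖) / (1 - s)) :
    ‖ψ t‖ ≤ (‖ψ 0‖ + M * t) / (1 - t) := by
  set τ : ℝ → ℝ := fun σ => 1 - exp (-σ)
  set b := -log (1 - t)
  have h1t : 0 < 1 - t := by linarith
  have hexp_b : exp b = (1 - t)⁻¹ := by rw [exp_neg, exp_log h1t]
  have hτ_b : τ b = t := by simp only [τ, b, neg_neg, exp_log h1t]; ring
  have hb : 0 ≤ b := neg_nonneg.2 (log_nonpos h1t.le (by linarith))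
  have hτ_0 : τ 0 = 0 := by simp [τ]
  have hτ_mono : StrictMono τ := fun σ₁ σ₂ h => sub_lt_sub_left (exp_lt_exp.2 (neg_lt_neg h)) 1
  have hτ_mem : ∀ σ ∈ Icc 0 b, τ σ ∈ Icc 0 t := fun σ hσ =>
    ⟨hτ_0 ▸ hτ_mono.monotone hσ.1, hτ_b ▸ hτ_mono.monotone hσ.2⟩
  have hτ_deriv : ∀ σ, HasDerivAt τ (exp (-σ)) σ := fun σ => by
    simpa using ((hasDerivAt_neg σ).exp).const_sub 1
  have hφ : ∀ σ ∈ Icc 0 b, HasDerivAt (ψ ∘ τ) (exp (-σ) • ψ' (τ σ)) σ := fun σ hσ =>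
    (hψ _ (hτ_mem σ hσ)).scomp σ (hτ_deriv σ)
  have hφ_bound : ∀ σ ∈ Ico 0 b, ‖exp (-σ) • ψ' (τ σ)‖ ≤ 1 * ‖ψ (τ σ)‖ + M := fun σ hσ => by
    have hτσ : τ σ ∈ Ico 0 t := ⟨hτ_0 ▸ hτ_mono.monotone hσ.1, hτ_b ▸ hτ_mono hσ.2⟩
    have h1τ : 1 - τ σ = exp (-σ) := by simp only [τ]; ring
    rw [norm_smul, norm_of_nonneg (exp_pos _).le]
    calc exp (-σ) * ‖ψ' (τ σ)‖ ≤ exp (-σ) * ((M + ‖ψ (τ σ)‖) / (1 - τ σ)) := by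
          gcongr; exact hbound _ hτσ
      _ = 1 * ‖ψ (τ σ)‖ + M := by rw [h1τ]; field_simp; ring
  have key := norm_le_gronwallBound_of_norm_deriv_right_le
    (fun σ hσ => (hφ σ hσ).continuousAt.continuousWithinAt)
    (fun σ hσ => (hφ σ (Ico_subset_Icc_self hσ)).hasDerivWithinAt)
    (by rw [Function.comp_apply, hτ_0]) hφ_bound b (right_mem_Icc.2 hb)
  rw [gronwallBound_of_K_ne_0 one_ne_zero] at key
  simp only [Function.comp, hτ_b, sub_zero, one_mul, div_one, hexp_b] at key
  convert key using 1
  field_simp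
  ring

theorem norm_sq_velocity_le {v : ℝ → E → E} {ψ : ℝ → E} {M t : ℝ} (ht0 : 0 ≤ t) (ht1 : t < 1)
    (hv : ∀ s ∈ Icc 0 t, ∀ z, ‖v s z‖ ≤ (M + ‖z‖) / (1 - s))
    (hψ : ∀ s ∈ Icc 0 t, HasDerivAt ψ (v s (ψ s)) s) :
    ‖v t (ψ t)‖ ^ 2 ≤ 2 * (‖ψ 0‖ ^ 2 + M ^ 2) / (1 - t) ^ 4 := by
  have h1t : 0 < 1 - t := by linarith
  have htraj := norm_le_of_norm_deriv_le_div_one_sub ht0 ht1 hψ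
    fun s hs => hv s (Ico_subset_Icc_self hs) _
  have hspeed : ‖v t (ψ t)‖ ≤ (‖ψ 0‖ + M) / (1 - t) ^ 2 :=
    calc ‖v t (ψ t)‖ ≤ (M + ‖ψ t‖) / (1 - t) := hv t (right_mem_Icc.2 ht0) _
      _ ≤ (M + (‖ψ 0‖ + M * t) / (1 - t)) / (1 - t) := by gcongr
      _ = (‖ψ 0‖ + M) / (1 - t) ^ 2 := by field_simp; ring
  calc ‖v t (ψ t)‖ ^ 2 ≤ ((‖ψ 0‖ + M) / (1 - t) ^ 2) ^ 2 := by gcongr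
    _ ≤ 2 * (‖ψ 0‖ ^ 2 + M ^ 2) / (1 - t) ^ 4 := by
      rw [div_pow, ← pow_mul]
      gcongr
      nlinarith [sq_nonneg (‖ψ 0‖ - M)]

end Flow

theorem empirical_rf_kinetic_energy_tail_general
    (d : ℕ)
    (M : ℝ)
    (T : ℝ) (hT1 : T < 1)
    (v : ℝ → EuclideanSpace ℝ (Fin d) → EuclideanSpace ℝ (Fin d))
    -- and in particular satisfies the growth bound
    (hv_bound : ∀ (t : ℝ), 0 ≤ t → t < 1 → ∀ z, ‖v t z‖ ≤ (M + ‖z‖) / (1 - t))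
    (ψ : EuclideanSpace ℝ (Fin d) → ℝ → EuclideanSpace ℝ (Fin d))
    (hψ0 : ∀ x₀, ψ x₀ 0 = x₀)
    (hψderiv : ∀ x₀, ∀ t ∈ Icc (0 : ℝ) T, HasDerivAt (ψ x₀) (v t (ψ x₀ t)) t)
    (t : ℝ) (ht : t ∈ Icc (0 : ℝ) T)
    (u : ℝ) (hu : 2 * (2 * d + M ^ 2) / (1 - t) ^ 4 ≤ u) :
    (Measure.pi fun _ : Fin d => gaussianReal 0 1)
        {x₀ : Fin d → ℝ | u ≤ ‖v t (ψ (WithLp.toLp 2 x₀) t)‖ ^ 2} ≤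
      ENNReal.ofReal (Real.exp (M ^ 2 / 16) * Real.exp (-((1 - t) ^ 4 / 32) * u)) := by
  have ht1 : t < 1 := ht.2.trans_lt hT1
  have h4 : 0 < (1 - t) ^ 4 := pow_pos (by linarith) 4
  set s := u * (1 - t) ^ 4 / 2 - M ^ 2 with hs_def
  have hs : 2 * Fintype.card (Fin d) ≤ s := by
    rw [div_le_iff₀ h4] at hu
    rw [Fintype.card_fin, hs_def]
    linarith
  have hsub : {x₀ : Fin d → ℝ | u ≤ ‖v t (ψ (WithLp.toLp 2 x₀) t)‖ ^ 2}
      ⊆ {x₀ | s ≤ ‖WithLp.toLp 2 x₀‖ ^ 2} := fun x₀ hx₀ => by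
    have hK := norm_sq_velocity_le ht.1 ht1 (fun s hs => hv_bound s hs.1 (hs.2.trans_lt ht1))
      fun s hs => hψderiv (WithLp.toLp 2 x₀) s ⟨hs.1, hs.2.trans ht.2⟩
    rw [hψ0, le_div_iff₀ h4] at hK
    have hu_le : u * (1 - t) ^ 4 ≤ _ := (mul_le_mul_of_nonneg_right hx₀ h4.le).trans hK
    show s ≤ _
    rw [hs_def]
    linarith
  calc _ ≤ _ := measure_mono hsub
    _ ≤ ENNReal.ofReal (exp (-s / 16)) := measure_norm_sq_ge_le_pi_gaussianReal hs
    _ = _ := by rw [← exp_add, hs_def]; ring_nf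

/-- Exponential tail of the instantaneous kinetic energy of the empirical rectified flow
with Gaussian source: with `X₀ ~ N(0, I_d)`, `M = max_i ‖x⁽ⁱ⁾‖`, `ψ` the flow of the
empirical rectified-flow velocity field `v̂*` (which satisfies
`‖v̂*(t,z)‖ ≤ (M + ‖z‖)/(1-t)`), and `K_t = ‖v̂*(t, ψ_t)‖²`, for every
`u ≥ 2(1-t)^{-4}(2d + M²)` one has `P(K_t ≥ u) ≤ e^{M²/16} e^{-(1-t)⁴ u/32}`. -/
theorem empirical_rf_kinetic_energy_tail
    (d N : ℕ) [NeZero N] (x : Fin N → EuclideanSpace ℝ (Fin d))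
    (M : ℝ)
    (hM : M = Finset.univ.sup' (Finset.univ_nonempty (α := Fin N)) fun i => ‖x i‖)
    (T : ℝ) (hT0 : 0 ≤ T) (hT1 : T < 1)
    (v : ℝ → EuclideanSpace ℝ (Fin d) → EuclideanSpace ℝ (Fin d))
    -- `v` is the empirical rectified-flow (softmax) velocity field
    (hv_def : ∀ (t : ℝ), 0 ≤ t → t < 1 → ∀ z,
      v t z = ∑ i, (Real.exp (-‖z - t • x i‖ ^ 2 / (2 * (1 - t) ^ 2)) /
          ∑ j, Real.exp (-‖z - t • x j‖ ^ 2 / (2 * (1 - t) ^ 2))) •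
        ((1 - t)⁻¹ • (x i - z)))
    -- and in particular satisfies the growth bound
    (hv_bound : ∀ (t : ℝ), 0 ≤ t → t < 1 → ∀ z, ‖v t z‖ ≤ (M + ‖z‖) / (1 - t))
    (ψ : EuclideanSpace ℝ (Fin d) → ℝ → EuclideanSpace ℝ (Fin d))
    (hψ0 : ∀ x₀, ψ x₀ 0 = x₀)
    (hψderiv : ∀ x₀, ∀ t ∈ Icc (0 : ℝ) T, HasDerivAt (ψ x₀) (v t (ψ x₀ t)) t)
    (t : ℝ) (ht : t ∈ Icc (0 : ℝ) T)
    (u : ℝ) (hu : 2 * (2 * d + M ^ 2) / (1 - t) ^ 4 ≤ u) :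
    (Measure.pi fun _ : Fin d => gaussianReal 0 1)
        {x₀ : Fin d → ℝ | u ≤ ‖v t (ψ (WithLp.toLp 2 x₀) t)‖ ^ 2} ≤
      ENNReal.ofReal (Real.exp (M ^ 2 / 16) * Real.exp (-((1 - t) ^ 4 / 32) * u)) :=
  empirical_rf_kinetic_energy_tail_general d M T hT1 v hv_bound ψ hψ0 hψderiv t ht u hu
end

section
/- Under the hypotheses of the instantaneous bound, the integrated kinetic energy E_T = ∫₀ᵀ K_t dt satisfies E_T ≤ c₃(T)(‖X₀‖² + M²) with c₃(T) = (2/3)((1-T)^{-3} - 1), and consequently for all u ≥ c₃(T)(2d + M²), P(E_T ≥ u) ≤ e^{M²/16} · exp(-u / (16 c₃(T))). -/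
open MeasureTheory ProbabilityTheory Set Real ENNReal

/-!
Integrating the bound `2 (1 - t)⁻⁴ (‖x₀‖² + M²)` over `[0, T]` gives `E_T ≤ c₃ (‖x₀‖² + M²)`.
Hence `{E_T ≥ u} ⊆ {‖x₀‖² ≥ s}` with `s = u / c₃ - M² ≥ 2d`, and the Chernoff bound with
`𝔼 exp(‖X₀‖² / 4) = 2^{d/2}` gives `P(‖X₀‖² ≥ s) ≤ 2^{d/2} e^{-s/4} ≤ e^{-s/16}`, the last step
because `s ≥ 2d` and `log 2 < 3/4`; finally `e^{-s/16} = e^{M²/16} e^{-u/(16 c₃)}`.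
-/

lemma lintegral_pi_prod_eq_prod_lintegral {ι : Type*} [Fintype ι] {Ω : ι → Type*}
    [∀ i, MeasurableSpace (Ω i)] (μ : (i : ι) → Measure (Ω i))
    [∀ i, IsProbabilityMeasure (μ i)]
    {f : (i : ι) → Ω i → ℝ≥0∞} (hf : ∀ i, Measurable (f i)) :
    ∫⁻ x, ∏ i, f i (x i) ∂Measure.pi μ = ∏ i, ∫⁻ y, f i y ∂μ i := by
  rw [lintegral_prod_eq_prod_lintegral_of_indepFun Finset.univ _
    (iIndepFun_pi fun i => (hf i).aemeasurable) fun i => (hf i).comp (measurable_pi_apply i)]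
  exact Finset.prod_congr rfl fun i _ => (measurePreserving_eval μ i).lintegral_comp (hf i)

lemma lintegral_exp_mul_sq_gaussianReal {c : ℝ} (hc : c < 1 / 2) :
    ∫⁻ x, ENNReal.ofReal (exp (c * x ^ 2)) ∂gaussianReal 0 1 =
      ENNReal.ofReal (√(1 - 2 * c))⁻¹ := by
  rw [gaussianReal_of_var_ne_zero 0 one_ne_zero,
    lintegral_withDensity_eq_lintegral_mul _ (measurable_gaussianPDF 0 1) (by fun_prop)]
  have hdensity : ∀ x, (gaussianPDF 0 1 * fun x => ENNReal.ofReal (exp (c * x ^ 2))) x =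
      ENNReal.ofReal ((√(2 * π))⁻¹ * exp (-(1 / 2 - c) * x ^ 2)) := by
    intro x
    simp only [Pi.mul_apply, gaussianPDF, gaussianPDFReal]
    rw [← ENNReal.ofReal_mul (by positivity), mul_assoc, ← exp_add]
    congr 3 <;> simp only [NNReal.coe_one, mul_one, sub_zero]
    ring
  simp_rw [hdensity]
  rw [← ofReal_integral_eq_lintegral_ofReal
      ((integrable_exp_neg_mul_sq (by linarith)).const_mul _) (ae_of_all _ fun x => by positivity),
    integral_const_mul, integral_gaussian]
  have h2c : 0 < 1 - 2 * c := by linarith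
  rw [show π / (1 / 2 - c) = 2 * π / (1 - 2 * c) by field_simp, sqrt_div' _ h2c.le]
  field_simp

section StandardGaussian

variable {ι : Type*} [Fintype ι]

lemma lintegral_exp_mul_norm_sq_pi_gaussianReal {c : ℝ} (hc : c < 1 / 2) :
    ∫⁻ x, ENNReal.ofReal (exp (c * ‖WithLp.toLp 2 x‖ ^ 2))
        ∂Measure.pi (fun _ : ι => gaussianReal 0 1) =
      ENNReal.ofReal (√(1 - 2 * c))⁻¹ ^ Fintype.card ι := by
  have hprod : ∀ x : ι → ℝ, ENNReal.ofReal (exp (c * ‖WithLp.toLp 2 x‖ ^ 2)) =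
      ∏ i, ENNReal.ofReal (exp (c * x i ^ 2)) := by
    intro x
    rw [EuclideanSpace.norm_sq_eq, Finset.mul_sum, exp_sum,
      ENNReal.ofReal_prod_of_nonneg fun i _ => (exp_pos _).le]
    simp [sq_abs]
  simp_rw [hprod]
  rw [lintegral_pi_prod_eq_prod_lintegral (f := fun _ y => ENNReal.ofReal (exp (c * y ^ 2))) _
      fun _ => by fun_prop, Finset.prod_const,
    lintegral_exp_mul_sq_gaussianReal hc, Finset.card_univ]

lemma pi_gaussianReal_norm_sq_ge_le_chernoff {c : ℝ} (hc0 : 0 ≤ c) (hc : c < 1 / 2) (s : ℝ) :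
    Measure.pi (fun _ : ι => gaussianReal 0 1)
        (WithLp.toLp 2 ⁻¹' {x : EuclideanSpace ℝ ι | s ≤ ‖x‖ ^ 2}) ≤
      ENNReal.ofReal (exp (-(c * s)) * (√(1 - 2 * c))⁻¹ ^ Fintype.card ι) := by
  have hmarkov := mul_meas_ge_le_lintegral₀ (μ := Measure.pi fun _ : ι => gaussianReal 0 1)
    (f := fun x => ENNReal.ofReal (exp (c * ‖WithLp.toLp 2 x‖ ^ 2))) (by fun_prop)
    (ENNReal.ofReal (exp (c * s)))
  rw [lintegral_exp_mul_norm_sq_pi_gaussianReal hc] at hmarkov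
  have hsub : WithLp.toLp 2 ⁻¹' {x : EuclideanSpace ℝ ι | s ≤ ‖x‖ ^ 2} ⊆
      {x | ENNReal.ofReal (exp (c * s)) ≤ ENNReal.ofReal (exp (c * ‖WithLp.toLp 2 x‖ ^ 2))} :=
    fun x hx => ENNReal.ofReal_le_ofReal (exp_le_exp.2 (mul_le_mul_of_nonneg_left hx hc0))
  rw [ENNReal.ofReal_mul (exp_pos _).le, ENNReal.ofReal_pow (by positivity), exp_neg,
    ENNReal.ofReal_inv_of_pos (exp_pos _), ← ENNReal.div_eq_inv_mul,
    ENNReal.le_div_iff_mul_le (by simp [exp_pos]) (by simp), mul_comm]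
  exact (mul_le_mul_right (measure_mono hsub) _).trans hmarkov

lemma pi_gaussianReal_norm_sq_ge_le_exp_div_sixteen {s : ℝ} (hs : 2 * Fintype.card ι ≤ s) :
    Measure.pi (fun _ : ι => gaussianReal 0 1)
        (WithLp.toLp 2 ⁻¹' {x : EuclideanSpace ℝ ι | s ≤ ‖x‖ ^ 2}) ≤
      ENNReal.ofReal (exp (-s / 16)) := by
  refine (pi_gaussianReal_norm_sq_ge_le_chernoff (c := 1 / 4) (by norm_num) (by norm_num)
    s).trans (ENNReal.ofReal_le_ofReal ?_)
  have hroot : (√(1 - 2 * (1 / 4 : ℝ)))⁻¹ ≤ exp (3 / 8) := by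
    rw [← sqrt_inv, sqrt_le_iff, ← exp_nat_mul]
    refine ⟨(exp_pos _).le, (log_le_iff_le_exp (by norm_num)).1 ?_⟩
    norm_num
    linarith [log_two_lt_d9]
  calc exp (-(1 / 4 * s)) * (√(1 - 2 * (1 / 4 : ℝ)))⁻¹ ^ Fintype.card ι
      ≤ exp (-(1 / 4 * s)) * exp (3 / 8) ^ Fintype.card ι := by gcongr
    _ = exp (-(1 / 4 * s) + Fintype.card ι * (3 / 8)) := by rw [← exp_nat_mul, exp_add]
    _ ≤ exp (-s / 16) := exp_le_exp.2 (by linarith)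

end StandardGaussian

lemma integral_two_div_one_sub_pow_four {T : ℝ} (hT : T < 1) :
    ∫ t in (0 : ℝ)..T, 2 / (1 - t) ^ 4 = 2 / 3 * (((1 - T) ^ 3)⁻¹ - 1) := by
  have hpos : ∀ t ∈ uIcc 0 T, 0 < 1 - t := fun t ht =>
    sub_pos.2 (ht.2.trans_lt (max_lt zero_lt_one hT))
  have hderiv : ∀ t ∈ uIcc 0 T,
      HasDerivAt (fun t : ℝ => 2 / 3 * ((1 - t) ^ 3)⁻¹) (2 / (1 - t) ^ 4) t := by
    intro t ht
    have hcube : HasDerivAt (fun x : ℝ => (1 - x) ^ 3) (3 * (1 - t) ^ 2 * (-1)) t := by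
      simpa using ((hasDerivAt_id t).const_sub 1).fun_pow 3
    refine ((hcube.inv (pow_ne_zero 3 (hpos t ht).ne')).const_mul (2 / 3 : ℝ)).congr_deriv ?_
    field_simp [(hpos t ht).ne']
  have hcont : ContinuousOn (fun t : ℝ => 2 / (1 - t) ^ 4) (uIcc 0 T) :=
    continuousOn_const.div (by fun_prop) fun t ht => pow_ne_zero 4 (hpos t ht).ne'
  rw [intervalIntegral.integral_eq_sub_of_hasDerivAt hderiv hcont.intervalIntegrable]
  norm_num
  ring

lemma intervalIntegral_le_of_le_two_div_one_sub_pow_four {f : ℝ → ℝ} {T : ℝ} (A : ℝ)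
    (hT0 : 0 ≤ T) (hT1 : T < 1) (hf : IntervalIntegrable f volume 0 T)
    (hfA : ∀ t ∈ Icc 0 T, f t ≤ 2 / (1 - t) ^ 4 * A) :
    ∫ t in (0 : ℝ)..T, f t ≤ 2 / 3 * (((1 - T) ^ 3)⁻¹ - 1) * A := by
  have hpos : ∀ t ∈ uIcc 0 T, (1 - t) ^ 4 ≠ 0 := fun t ht =>
    pow_ne_zero 4 (sub_pos.2 (ht.2.trans_lt (max_lt zero_lt_one hT1))).ne'
  have hbound : IntervalIntegrable (fun t => 2 / (1 - t) ^ 4 * A) volume 0 T :=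
    ((continuousOn_const.div (by fun_prop) hpos).mul continuousOn_const).intervalIntegrable
  calc ∫ t in (0 : ℝ)..T, f t ≤ ∫ t in (0 : ℝ)..T, 2 / (1 - t) ^ 4 * A :=
        intervalIntegral.integral_mono_on hT0 hf hbound hfA
    _ = _ := by rw [intervalIntegral.integral_mul_const, integral_two_div_one_sub_pow_four hT1]

theorem empirical_rf_integrated_energy_tail_general
    (d : ℕ) (T : ℝ) (hT0 : 0 < T) (hT1 : T < 1) (M : ℝ)
    (K : ℝ → EuclideanSpace ℝ (Fin d) → ℝ)
    (hK : ∀ x₀, ∀ t ∈ Icc (0 : ℝ) T, K t x₀ ≤ 2 / (1 - t) ^ 4 * (‖x₀‖ ^ 2 + M ^ 2))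
    (hKint : ∀ x₀, IntervalIntegrable (fun t => K t x₀) volume 0 T)
    (c₃ : ℝ) (hc₃ : c₃ = (2 / 3) * (((1 - T) ^ 3)⁻¹ - 1)) :
    (∀ x₀, (∫ t in (0 : ℝ)..T, K t x₀) ≤ c₃ * (‖x₀‖ ^ 2 + M ^ 2)) ∧
      ∀ u : ℝ, c₃ * (2 * d + M ^ 2) ≤ u →
        (Measure.pi fun _ : Fin d => gaussianReal 0 1)
            (WithLp.toLp 2 ⁻¹' {x₀ : EuclideanSpace ℝ (Fin d) | u ≤ ∫ t in (0 : ℝ)..T, K t x₀}) ≤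
          ENNReal.ofReal (Real.exp (M ^ 2 / 16) * Real.exp (-u / (16 * c₃))) := by
  have henergy (x₀ : EuclideanSpace ℝ (Fin d)) :
      ∫ t in (0 : ℝ)..T, K t x₀ ≤ c₃ * (‖x₀‖ ^ 2 + M ^ 2) :=
    hc₃ ▸ intervalIntegral_le_of_le_two_div_one_sub_pow_four _ hT0.le hT1 (hKint x₀) (hK x₀)
  have hc₃pos : 0 < c₃ := by
    have hcube : (1 - T) ^ 3 < 1 := pow_lt_one₀ (by linarith) (by linarith) (by norm_num)
    rw [hc₃]
    exact mul_pos (by norm_num) (sub_pos.2 ((one_lt_inv₀ (pow_pos (sub_pos.2 hT1) 3)).2 hcube))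
  refine ⟨henergy, fun u hu => ?_⟩
  have hs : 2 * d ≤ u / c₃ - M ^ 2 := by
    rw [le_sub_iff_add_le, le_div_iff₀ hc₃pos]
    linarith
  calc _ ≤ (Measure.pi fun _ : Fin d => gaussianReal 0 1)
        (WithLp.toLp 2 ⁻¹' {x : EuclideanSpace ℝ (Fin d) | u / c₃ - M ^ 2 ≤ ‖x‖ ^ 2}) := by
        refine measure_mono (preimage_mono fun x hx => ?_)
        rw [mem_ofPred_eq, sub_le_iff_le_add, div_le_iff₀ hc₃pos]
        linarith [hx.out.trans (henergy x)]
    _ ≤ ENNReal.ofReal (exp (-(u / c₃ - M ^ 2) / 16)) :=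
        pi_gaussianReal_norm_sq_ge_le_exp_div_sixteen (by simpa using hs)
    _ = _ := by
        rw [← exp_add]
        congr 2
        field_simp
        ring

/-- Integrated kinetic-energy bound and exponential tail for the empirical rectified flow
with Gaussian source: if `K_t ≤ 2(1-t)^{-4}(‖X₀‖² + M²)` on `[0,T]` with `T < 1`, then
`E_T = ∫₀ᵀ K_t dt ≤ c₃(T)(‖X₀‖² + M²)` with `c₃(T) = (2/3)((1-T)^{-3} - 1)`, and for
every `u ≥ c₃(T)(2d + M²)`, `P(E_T ≥ u) ≤ e^{M²/16} e^{-u/(16 c₃(T))}`. -/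
theorem empirical_rf_integrated_energy_tail
    (d : ℕ) (T : ℝ) (hT0 : 0 < T) (hT1 : T < 1) (M : ℝ) (hM : 0 ≤ M)
    (K : ℝ → EuclideanSpace ℝ (Fin d) → ℝ)
    (hK_nonneg : ∀ t x₀, 0 ≤ K t x₀)
    (hK : ∀ x₀, ∀ t ∈ Icc (0 : ℝ) T, K t x₀ ≤ 2 / (1 - t) ^ 4 * (‖x₀‖ ^ 2 + M ^ 2))
    (hKint : ∀ x₀, IntervalIntegrable (fun t => K t x₀) volume 0 T)
    (c₃ : ℝ) (hc₃ : c₃ = (2 / 3) * (((1 - T) ^ 3)⁻¹ - 1)) :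
    (∀ x₀, (∫ t in (0 : ℝ)..T, K t x₀) ≤ c₃ * (‖x₀‖ ^ 2 + M ^ 2)) ∧
      ∀ u : ℝ, c₃ * (2 * d + M ^ 2) ≤ u →
        (Measure.pi fun _ : Fin d => gaussianReal 0 1)
            (WithLp.toLp 2 ⁻¹' {x₀ : EuclideanSpace ℝ (Fin d) | u ≤ ∫ t in (0 : ℝ)..T, K t x₀}) ≤
          ENNReal.ofReal (Real.exp (M ^ 2 / 16) * Real.exp (-u / (16 * c₃))) :=
  empirical_rf_integrated_energy_tail_general d T hT0 hT1 M K hK hKint c₃ hc₃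
end
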